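/- arXiv:2301.13767 — 2 statements merged into one kernel-verified Lean document; each statement's English description precedes it below -/
import Mathlib

section
/- Let (Ω, μ) be a finite probability space, Y : Ω → [0,1], f : Ω → [0,1] with finite range, and H, C two classes of functions Ω → ℝ, each closed under affine transformations. Suppose: (i) f is multicalibrated with respect to H (for all h ∈ H and all v in the range of f with positive probability, E[h·(Y - v) | f = v] = 0); (ii) H satisfies the weak learning condition relative to C: for every S ⊆ Ω with Pr[S] > 0, if min_{c ∈ C} E[(c - Y)² | S] < E[(ȳ_S - Y)² | S] with ȳ_S = E[Y | S], then there exists h ∈ H with E[(h - Y)² | S] < E[(ȳ_S - Y)² | S]. Then f is multicalibrated with respect to C: for every c ∈ C and every v in the range of f with positive probability, E[c·(Y - v) | f = v] = 0. -/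
open scoped Classical
open Finset

variable {Ω : Type*}

/-- Probability of an event `S` under weight function `μ` on a finite space. -/
noncomputable def prEv [Fintype Ω] (μ : Ω → ℝ) (S : Set Ω) : ℝ :=
  ∑ ω : Ω, if ω ∈ S then μ ω else 0

/-- Conditional expectation of `g` given the event `S`. -/
noncomputable def cexp [Fintype Ω] (μ : Ω → ℝ) (S : Set Ω) (g : Ω → ℝ) : ℝ :=
  (∑ ω : Ω, if ω ∈ S then μ ω * g ω else 0) / prEv μ S

/-- (Unconditional) expectation of `g`. -/
noncomputable def exv [Fintype Ω] (μ : Ω → ℝ) (g : Ω → ℝ) : ℝ :=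
  ∑ ω : Ω, μ ω * g ω

/-- Numerator of the conditional expectation. -/
noncomputable def numE [Fintype Ω] (μ : Ω → ℝ) (S : Set Ω) (g : Ω → ℝ) : ℝ :=
  ∑ ω : Ω, if ω ∈ S then μ ω * g ω else 0

lemma cexp_eq [Fintype Ω] (μ : Ω → ℝ) (S : Set Ω) (g : Ω → ℝ) :
    cexp μ S g = numE μ S g / prEv μ S := rfl

lemma cexp_congr [Fintype Ω] (μ : Ω → ℝ) (S : Set Ω) {g g' : Ω → ℝ}
    (h : ∀ ω ∈ S, g ω = g' ω) : cexp μ S g = cexp μ S g' := by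
  unfold cexp
  congr 1
  apply Finset.sum_congr rfl
  intro ω _
  by_cases hω : ω ∈ S <;> simp [hω, h]

lemma numE_comb [Fintype Ω] (μ : Ω → ℝ) (S : Set Ω) (g1 g2 g3 : Ω → ℝ) (a b : ℝ) :
    numE μ S (fun ω => g1 ω + a * g2 ω + b * g3 ω)
      = numE μ S g1 + a * numE μ S g2 + b * numE μ S g3 := by
  unfold numE
  rw [Finset.mul_sum, Finset.mul_sum, ← Finset.sum_add_distrib, ← Finset.sum_add_distrib]
  apply Finset.sum_congr rfl
  intro ω _
  by_cases hω : ω ∈ S <;> simp [hω] <;> ring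

lemma numE_congr [Fintype Ω] (μ : Ω → ℝ) (S : Set Ω) {g g' : Ω → ℝ}
    (h : ∀ ω ∈ S, g ω = g' ω) : numE μ S g = numE μ S g' := by
  unfold numE
  apply Finset.sum_congr rfl
  intro ω _
  by_cases hω : ω ∈ S <;> simp [hω, h]

lemma numE_const [Fintype Ω] (μ : Ω → ℝ) (S : Set Ω) (b : ℝ) :
    numE μ S (fun _ => b) = b * prEv μ S := by
  unfold numE prEv
  rw [Finset.mul_sum]
  apply Finset.sum_congr rfl
  intro ω _
  by_cases hω : ω ∈ S <;> simp [hω] <;> ring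

lemma numE_sq_nonneg [Fintype Ω] (μ : Ω → ℝ) (hμ : ∀ ω, 0 ≤ μ ω) (S : Set Ω) (g : Ω → ℝ) :
    0 ≤ numE μ S (fun ω => (g ω) ^ 2) := by
  unfold numE
  apply Finset.sum_nonneg
  intro ω _
  by_cases hω : ω ∈ S <;> simp [hω]
  exact mul_nonneg (hμ ω) (sq_nonneg _)

/-- multicalibration with respect to H plus the weak learning condition
of H relative to C implies multicalibration with respect to C. -/
theorem stmt_14 [Fintype Ω] (μ : Ω → ℝ) (hμ : ∀ ω, 0 ≤ μ ω) (hμ1 : ∑ ω : Ω, μ ω = 1)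
    (Y f : Ω → ℝ) (hY : ∀ ω, Y ω ∈ Set.Icc (0 : ℝ) 1) (hf : ∀ ω, f ω ∈ Set.Icc (0 : ℝ) 1)
    (H C : Set (Ω → ℝ)) (hHne : H.Nonempty)
    (haffH : ∀ h ∈ H, ∀ a b : ℝ, (fun ω => a * h ω + b) ∈ H)
    (haffC : ∀ c ∈ C, ∀ a b : ℝ, (fun ω => a * c ω + b) ∈ C)
    (hmcH : ∀ h ∈ H, ∀ v : ℝ, 0 < prEv μ {ω | f ω = v} →
      cexp μ {ω | f ω = v} (fun ω => h ω * (Y ω - v)) = 0)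
    (hwl : ∀ S : Set Ω, 0 < prEv μ S →
      (∃ c ∈ C, cexp μ S (fun ω => (c ω - Y ω) ^ 2) <
          cexp μ S (fun ω => (cexp μ S Y - Y ω) ^ 2)) →
        ∃ h ∈ H, cexp μ S (fun ω => (h ω - Y ω) ^ 2) <
          cexp μ S (fun ω => (cexp μ S Y - Y ω) ^ 2)) :
    ∀ c ∈ C, ∀ v : ℝ, 0 < prEv μ {ω | f ω = v} →
      cexp μ {ω | f ω = v} (fun ω => c ω * (Y ω - v)) = 0 := by
  intro c hc v hv
  set S : Set Ω := {ω | f ω = v} with hSdef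
  have hp : 0 < prEv μ S := hv
  have hpne : prEv μ S ≠ 0 := ne_of_gt hp
  obtain ⟨h₀, hh₀⟩ := hHne
  -- The constant 1 is in H, so E[Y - v | S] = 0, hence cexp S Y = v.
  have hEy : numE μ S (fun ω => Y ω - v) = 0 := by
    have h2 := hmcH _ (haffH h₀ hh₀ 0 1) v hv
    have h3 : cexp μ S (fun ω => Y ω - v)
        = cexp μ S (fun ω => (0 * h₀ ω + 1) * (Y ω - v)) :=
      cexp_congr μ S (fun ω _ => by ring)
    rw [h2] at h3
    rw [cexp_eq] at h3
    exact (div_eq_zero_iff.mp h3).resolve_right hpne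
  have hYv : cexp μ S Y = v := by
    have h4 : numE μ S (fun ω => Y ω - v)
        = numE μ S Y + (-v) * numE μ S (fun _ => (1:ℝ)) + 0 * numE μ S (fun _ => (0:ℝ)) := by
      have := numE_comb μ S Y (fun _ => (1:ℝ)) (fun _ => (0:ℝ)) (-v) 0
      rw [← this]
      exact numE_congr μ S (fun ω _ => by ring)
    rw [numE_const] at h4
    have h5 : numE μ S Y = v * prEv μ S := by
      have := hEy
      rw [h4] at this
      linarith
    rw [cexp_eq, h5]
    field_simp
  -- Main argument: suppose the conclusion fails.
  rw [cexp_eq, div_eq_zero_iff]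
  left
  by_contra hA
  set A : ℝ := numE μ S (fun ω => c ω * (Y ω - v)) with hAdef
  set Q : ℝ := numE μ S (fun ω => (c ω) ^ 2) with hQdef
  have hQnn : 0 ≤ Q := numE_sq_nonneg μ hμ S c
  -- If Q = 0 then A = 0.
  have hQpos : 0 < Q := by
    rcases lt_or_eq_of_le hQnn with h | h
    · exact h
    · exfalso
      apply hA
      have hterm : ∀ ω ∈ Finset.univ,
          (if ω ∈ S then μ ω * (c ω) ^ 2 else 0) = 0 := by
        rw [← Finset.sum_eq_zero_iff_of_nonneg]
        · exact h.symm
        · intro ω _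
          by_cases hω : ω ∈ S <;> simp [hω]
          exact mul_nonneg (hμ ω) (sq_nonneg _)
      apply Finset.sum_eq_zero
      intro ω _
      by_cases hω : ω ∈ S
      · simp only [hω, if_true]
        have := hterm ω (Finset.mem_univ ω)
        rw [if_pos hω] at this
        rcases mul_eq_zero.mp this with h1 | h1
        · rw [h1]; ring
        · rw [pow_eq_zero_iff (by norm_num)] at h1
          rw [h1]; ring
      · simp [hω]
  set ε : ℝ := A / Q with hεdef
  -- The competitor c' = ε c + v beats the constant v.
  have hexp : numE μ S (fun ω => ((fun ω => ε * c ω + v) ω - Y ω) ^ 2)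
      = numE μ S (fun ω => (v - Y ω) ^ 2) + (-(2 * ε)) * A + ε ^ 2 * Q := by
    have := numE_comb μ S (fun ω => (v - Y ω) ^ 2)
      (fun ω => c ω * (Y ω - v)) (fun ω => (c ω) ^ 2) (-(2 * ε)) (ε ^ 2)
    rw [← this]
    exact numE_congr μ S (fun ω _ => by ring)
  have hnumlt : numE μ S (fun ω => ((fun ω => ε * c ω + v) ω - Y ω) ^ 2)
      < numE μ S (fun ω => (v - Y ω) ^ 2) := by
    rw [hexp]
    have hA2 : 0 < A ^ 2 / Q := div_pos (by positivity) hQpos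
    have : (-(2 * ε)) * A + ε ^ 2 * Q = -(A ^ 2 / Q) := by
      rw [hεdef]; field_simp; ring
    linarith
  have hclt : cexp μ S (fun ω => ((fun ω => ε * c ω + v) ω - Y ω) ^ 2)
      < cexp μ S (fun ω => (cexp μ S Y - Y ω) ^ 2) := by
    rw [hYv, cexp_eq, cexp_eq]
    gcongr
  obtain ⟨h, hh, hlth⟩ := hwl S hp ⟨_, haffC c hc ε v, hclt⟩
  rw [hYv] at hlth
  have hnumh : numE μ S (fun ω => (h ω - Y ω) ^ 2)
      < numE μ S (fun ω => (v - Y ω) ^ 2) := by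
    rw [cexp_eq, cexp_eq] at hlth
    exact (div_lt_div_iff_of_pos_right hp).mp hlth
  -- expansion of (h - Y)^2
  have hexph : numE μ S (fun ω => (h ω - Y ω) ^ 2)
      = numE μ S (fun ω => (v - Y ω) ^ 2)
        + 1 * numE μ S (fun ω => (h ω - v) ^ 2)
        + (-2) * numE μ S (fun ω => (h ω - v) * (Y ω - v)) := by
    have := numE_comb μ S (fun ω => (v - Y ω) ^ 2)
      (fun ω => (h ω - v) ^ 2) (fun ω => (h ω - v) * (Y ω - v)) 1 (-2)
    rw [← this]
    exact numE_congr μ S (fun ω _ => by ring)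
  -- multicalibration kills the cross term
  have hcross : numE μ S (fun ω => (h ω - v) * (Y ω - v)) = 0 := by
    have h2 := hmcH _ (haffH h hh 1 (-v)) v hv
    have h3 : cexp μ S (fun ω => (h ω - v) * (Y ω - v))
        = cexp μ S (fun ω => (1 * h ω + -v) * (Y ω - v)) :=
      cexp_congr μ S (fun ω _ => by ring)
    rw [h2] at h3
    rw [cexp_eq] at h3
    exact (div_eq_zero_iff.mp h3).resolve_right hpne
  have hsqnn : 0 ≤ numE μ S (fun ω => (h ω - v) ^ 2) :=
    numE_sq_nonneg μ hμ S (fun ω => h ω - v)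
  rw [hexph, hcross] at hnumh
  linarith
end

section
/- Let (Ω, μ) be a finite probability space, Y : Ω → {0,1}, f : Ω → [0,1] with finite range R(f), and h : Ω → ℝ with h(ω)² ≤ B for all ω. Suppose Σ_{v ∈ R(f)} Pr[f=v] · (E[h·(Y - v) | f = v])² ≤ α and Σ_{v ∈ R(f)} Pr[f=v] · (E[Y - v | f = v])² ≤ α. Then Σ_{v ∈ R(f)} Pr[f=v] · |E[(h - h̄_v)(Y - ȳ_v) | f = v]| ≤ √α·(1 + √B), where h̄_v = E[h | f = v] and ȳ_v = E[Y | f = v]. -/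
/-!
Writing `h̄ = E[h | f = v]`, the conditional covariance splits as
`Cov(h, Y | f = v) = E[h (Y - v) | f = v] - h̄ · E[Y - v | f = v]`.
Since `|h̄| ≤ √B`, weighting by `Pr[f = v]` and summing bounds the left side by the
`ℓ₁` norms of the two calibration errors, and Cauchy–Schwarz bounds each of these by
`√α`, the square root of the corresponding `ℓ₂` norm.
-/

open scoped Classical
open Finset

variable {Ω : Type*}

noncomputable def ccov [Fintype Ω] (μ : Ω → ℝ) (S : Set Ω) (a b : Ω → ℝ) : ℝ :=
  cexp μ S (fun ω => (a ω - cexp μ S a) * (b ω - cexp μ S b))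

theorem sum_mul_abs_le_sqrt_of_sum_mul_sq_le {ι : Type*} (s : Finset ι) {p A : ι → ℝ} {α : ℝ}
    (hp : ∀ i ∈ s, 0 ≤ p i) (hps : ∑ i ∈ s, p i ≤ 1) (hA : ∑ i ∈ s, p i * A i ^ 2 ≤ α) :
    ∑ i ∈ s, p i * |A i| ≤ Real.sqrt α := by
  refine (le_abs_self _).trans (Real.abs_le_sqrt ?_)
  have hA₀ : 0 ≤ ∑ i ∈ s, p i * A i ^ 2 := sum_nonneg fun i hi => by have := hp i hi; positivity
  calc (∑ i ∈ s, p i * |A i|) ^ 2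
      ≤ (∑ i ∈ s, p i) * ∑ i ∈ s, p i * A i ^ 2 :=
        sum_sq_le_sum_mul_sum_of_sq_le_mul s hp (fun i hi => by have := hp i hi; positivity)
          fun i _ => by rw [mul_pow, sq_abs, ← mul_assoc, sq]
    _ ≤ 1 * α := mul_le_mul hps hA hA₀ zero_le_one
    _ = α := one_mul α

section Conditional

variable [Fintype Ω] {μ : Ω → ℝ} {S : Set Ω}

theorem prEv_nonneg (hμ : ∀ ω, 0 ≤ μ ω) (S : Set Ω) : 0 ≤ prEv μ S :=
  sum_nonneg fun ω _ => by split_ifs <;> simp [hμ ω]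

theorem sum_prEv_fiber {β : Type*} (μ : Ω → ℝ) (f : Ω → β) :
    ∑ v ∈ image f univ, prEv μ {ω | f ω = v} = ∑ ω, μ ω := by
  simp only [prEv, Set.mem_ofPred_eq]
  rw [sum_comm]
  exact sum_congr rfl fun ω _ => by simp

theorem cexp_add (g₁ g₂ : Ω → ℝ) :
    cexp μ S (fun ω => g₁ ω + g₂ ω) = cexp μ S g₁ + cexp μ S g₂ := by
  simp only [cexp, ← add_div, ← sum_add_distrib]
  congr 1
  exact sum_congr rfl fun ω _ => by split_ifs <;> ring

theorem cexp_sub (g₁ g₂ : Ω → ℝ) :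
    cexp μ S (fun ω => g₁ ω - g₂ ω) = cexp μ S g₁ - cexp μ S g₂ := by
  simp only [cexp, ← sub_div, ← sum_sub_distrib]
  congr 1
  exact sum_congr rfl fun ω _ => by split_ifs <;> ring

theorem cexp_const_mul (c : ℝ) (g : Ω → ℝ) :
    cexp μ S (fun ω => c * g ω) = c * cexp μ S g := by
  simp only [cexp, mul_div_assoc', mul_sum]
  congr 1
  exact sum_congr rfl fun ω _ => by split_ifs <;> ring

theorem cexp_const (hS : prEv μ S ≠ 0) (c : ℝ) : cexp μ S (fun _ => c) = c := by
  rw [cexp, div_eq_iff hS, prEv, mul_sum]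
  exact sum_congr rfl fun ω _ => by split_ifs <;> ring

theorem ccov_eq (hS : prEv μ S ≠ 0) (a b : Ω → ℝ) (c : ℝ) :
    ccov μ S a b =
      cexp μ S (fun ω => a ω * (b ω - c)) - cexp μ S a * cexp μ S (fun ω => b ω - c) := by
  set ma := cexp μ S a
  set mb := cexp μ S b
  have hsplit : (fun ω => (a ω - ma) * (b ω - mb)) = fun ω =>
      (a ω * (b ω - c) - ma * (b ω - c)) + ((c - mb) * a ω - (c - mb) * ma) := by
    funext ω; ring
  rw [ccov, hsplit, cexp_add, cexp_sub, cexp_sub, cexp_const_mul, cexp_const_mul,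
    cexp_const hS, cexp_sub, cexp_const hS]
  ring

theorem abs_cexp_le (hμ : ∀ ω, 0 ≤ μ ω) (hS : 0 < prEv μ S) {g : Ω → ℝ} {M : ℝ}
    (hg : ∀ ω, |g ω| ≤ M) : |cexp μ S g| ≤ M := by
  rw [cexp, abs_div, abs_of_pos hS, div_le_iff₀ hS, prEv, mul_sum]
  refine (abs_sum_le_sum_abs _ _).trans (sum_le_sum fun ω _ => ?_)
  split_ifs
  · rw [abs_mul, abs_of_nonneg (hμ ω), mul_comm M]
    exact mul_le_mul_of_nonneg_left (hg ω) (hμ ω)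
  · simp

theorem prEv_mul_abs_ccov_le (hμ : ∀ ω, 0 ≤ μ ω) {a : Ω → ℝ} {M : ℝ}
    (ha : ∀ ω, |a ω| ≤ M) (b : Ω → ℝ) (c : ℝ) :
    prEv μ S * |ccov μ S a b| ≤
      prEv μ S * |cexp μ S (fun ω => a ω * (b ω - c))| +
        M * (prEv μ S * |cexp μ S (fun ω => b ω - c)|) := by
  rcases (prEv_nonneg hμ S).eq_or_lt with hS | hS
  · simp [← hS]
  have hma : |cexp μ S a| ≤ M := abs_cexp_le hμ hS ha
  rw [ccov_eq hS.ne' a b c]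
  calc prEv μ S * |cexp μ S (fun ω => a ω * (b ω - c)) - cexp μ S a * cexp μ S (fun ω => b ω - c)|
      ≤ prEv μ S * (|cexp μ S (fun ω => a ω * (b ω - c))| +
          |cexp μ S a| * |cexp μ S (fun ω => b ω - c)|) := by
        gcongr
        exact (abs_sub _ _).trans_eq (by rw [abs_mul])
    _ ≤ prEv μ S * (|cexp μ S (fun ω => a ω * (b ω - c))| +
          M * |cexp μ S (fun ω => b ω - c)|) := by gcongr
    _ = _ := by ring

end Conditional

theorem stmt_16_general [Fintype Ω] (μ : Ω → ℝ) (hμ : ∀ ω, 0 ≤ μ ω) (hμ1 : ∑ ω : Ω, μ ω = 1)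
    (Y f : Ω → ℝ)
    (h : Ω → ℝ) (B α : ℝ)
    (hhB : ∀ ω, (h ω) ^ 2 ≤ B)
    (hmc : ∑ v ∈ Finset.image f Finset.univ,
        prEv μ {ω | f ω = v} *
          (cexp μ {ω | f ω = v} (fun ω => h ω * (Y ω - v))) ^ 2 ≤ α)
    (hcal : ∑ v ∈ Finset.image f Finset.univ,
        prEv μ {ω | f ω = v} *
          (cexp μ {ω | f ω = v} (fun ω => Y ω - v)) ^ 2 ≤ α) :
    ∑ v ∈ Finset.image f Finset.univ,
        prEv μ {ω | f ω = v} *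
          |cexp μ {ω | f ω = v} (fun ω =>
            (h ω - cexp μ {ω' | f ω' = v} h) *
              (Y ω - cexp μ {ω' | f ω' = v} Y))| ≤
      Real.sqrt α * (1 + Real.sqrt B) := by
  have hp : ∀ v ∈ image f univ, 0 ≤ prEv μ {ω | f ω = v} := fun v _ => prEv_nonneg hμ _
  have hps : ∑ v ∈ image f univ, prEv μ {ω | f ω = v} ≤ 1 :=
    ((sum_prEv_fiber μ f).trans hμ1).le
  have hh : ∀ ω, |h ω| ≤ Real.sqrt B := fun ω => Real.abs_le_sqrt (hhB ω)
  calc _ ≤ ∑ v ∈ image f univ,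
        (prEv μ {ω | f ω = v} * |cexp μ {ω | f ω = v} (fun ω => h ω * (Y ω - v))| +
          Real.sqrt B * (prEv μ {ω | f ω = v} * |cexp μ {ω | f ω = v} (fun ω => Y ω - v)|)) :=
        sum_le_sum fun v _ => prEv_mul_abs_ccov_le hμ hh Y v
    _ = ∑ v ∈ image f univ,
          prEv μ {ω | f ω = v} * |cexp μ {ω | f ω = v} (fun ω => h ω * (Y ω - v))| +
        Real.sqrt B * ∑ v ∈ image f univ,
          prEv μ {ω | f ω = v} * |cexp μ {ω | f ω = v} (fun ω => Y ω - v)| := by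
        rw [sum_add_distrib, mul_sum]
    _ ≤ Real.sqrt α + Real.sqrt B * Real.sqrt α := by
        gcongr
        · exact sum_mul_abs_le_sqrt_of_sum_mul_sq_le _ hp hps hmc
        · exact sum_mul_abs_le_sqrt_of_sum_mul_sq_le _ hp hps hcal
    _ = Real.sqrt α * (1 + Real.sqrt B) := by ring

/-- ℓ₂ approximate multicalibration and approximate calibration imply
the covariance notion of approximate multicalibration with parameter √α·(1+√B). -/
theorem stmt_16 [Fintype Ω] (μ : Ω → ℝ) (hμ : ∀ ω, 0 ≤ μ ω) (hμ1 : ∑ ω : Ω, μ ω = 1)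
    (Y f : Ω → ℝ) (hY : ∀ ω, Y ω = 0 ∨ Y ω = 1) (hf : ∀ ω, f ω ∈ Set.Icc (0 : ℝ) 1)
    (h : Ω → ℝ) (B α : ℝ) (hB : 0 ≤ B) (hα : 0 ≤ α)
    (hhB : ∀ ω, (h ω) ^ 2 ≤ B)
    (hmc : ∑ v ∈ Finset.image f Finset.univ,
        prEv μ {ω | f ω = v} *
          (cexp μ {ω | f ω = v} (fun ω => h ω * (Y ω - v))) ^ 2 ≤ α)
    (hcal : ∑ v ∈ Finset.image f Finset.univ,
        prEv μ {ω | f ω = v} *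
          (cexp μ {ω | f ω = v} (fun ω => Y ω - v)) ^ 2 ≤ α) :
    ∑ v ∈ Finset.image f Finset.univ,
        prEv μ {ω | f ω = v} *
          |cexp μ {ω | f ω = v} (fun ω =>
            (h ω - cexp μ {ω' | f ω' = v} h) *
              (Y ω - cexp μ {ω' | f ω' = v} Y))| ≤
      Real.sqrt α * (1 + Real.sqrt B) :=
  stmt_16_general μ hμ hμ1 Y f h B α hhB hmc hcal
end
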